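/- arXiv:1905.08683 — 2 statements merged into one kernel-verified Lean document; each statement's English description precedes it below -/
import Mathlib

section
/- Let G and H be finite connected simple graphs, fix a root (r_G, r_H) of G□H, and let c be a pebbling configuration on G□H. For each j ∈ V(H), let N_j denote the maximum, over all finite sequences of pebbling moves that only move pebbles between vertices of the slice G_j (i.e., moves from (i,j) to (i',j) with i adjacent to i' in G), of the number of pebbles placed on the vertex (r_G, j). If Σ_{j∈V(H)} N_j ≥ π(H), then c is (r_G, r_H)-solvable; equivalently, every configuration that is not (r_G, r_H)-solvable satisfies Σ_{j∈V(H)} N_j ≤ π(H) − 1. -/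
/-!
Running the within-slice moves of each slice `G_j` in turn (they touch pairwise disjoint sets
of vertices) leaves at least `N j` pebbles on every `(r_G, j)`. The column `{r_G} × V(H)` is
then a copy of `H` carrying at least `π(H)` pebbles, and since `H` is connected `π(H)` is
attained, so some sequence of `H`-moves reaches `r_H`; it lifts to `G □ H`. Both liftings are
instances of one fact: moves on `G` lift along a graph embedding `G ↪g K` to any configuration
dominating the pulled-back one, leaving the vertices off the image untouched.
-/

open SimpleGraph Finset

/-- A single pebbling move on `G`: remove two pebbles from a vertex `v` with at least two
pebbles and add one pebble to an adjacent vertex `w`. -/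
def PebblingMove {V : Type*} (G : SimpleGraph V) (c c' : V → ℕ) : Prop :=
  ∃ v w, G.Adj v w ∧ 2 ≤ c v ∧ c' v = c v - 2 ∧ c' w = c w + 1 ∧
    ∀ u, u ≠ v → u ≠ w → c' u = c u

/-- Some finite sequence of pebbling moves starting from `c` places at least `t` pebbles
on the vertex `r`. -/
def NSolvable {V : Type*} (G : SimpleGraph V) (c : V → ℕ) (r : V) (t : ℕ) : Prop :=
  ∃ c', Relation.ReflTransGen (PebblingMove G) c c' ∧ t ≤ c' r

/-- A configuration `c` is `r`-solvable. -/
def Solvable {V : Type*} (G : SimpleGraph V) (c : V → ℕ) (r : V) : Prop :=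
  NSolvable G c r 1

/-- The pebbling number `π(G)`: least `k` such that every configuration of size `k` is
`r`-solvable for every root `r`. -/
noncomputable def pebblingNumber {V : Type*} (G : SimpleGraph V) [Fintype V] : ℕ :=
  sInf {k | ∀ c : V → ℕ, (∑ v, c v) = k → ∀ r, Solvable G c r}

/-- The 2-pebbling number `π₂(G, s)`: least `m` such that for every root `r`, every
configuration of size at least `m` with support of size exactly `s` can place two pebbles
on `r`. -/
noncomputable def twoPebblingNumber {V : Type*} (G : SimpleGraph V) [Fintype V] (s : ℕ) : ℕ :=
  sInf {m | ∀ (r : V) (c : V → ℕ), m ≤ ∑ v, c v →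
    (Finset.univ.filter fun v => 1 ≤ c v).card = s → NSolvable G c r 2}

/-- A pebbling move on `G □ H` that stays within the `G`-slice at `j ∈ V(H)`:
two pebbles are removed from `(i, j)` and one is added to `(i', j)` with `i ~ i'` in `G`. -/
def SliceMove {α β : Type*} (G : SimpleGraph α) (j : β) (c c' : α × β → ℕ) : Prop :=
  ∃ i i', G.Adj i i' ∧ 2 ≤ c (i, j) ∧ c' (i, j) = c (i, j) - 2 ∧
    c' (i', j) = c (i', j) + 1 ∧ ∀ u : α × β, u ≠ (i, j) → u ≠ (i', j) → c' u = c u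

open Relation

section Pebbling

variable {V W : Type*} {G : SimpleGraph V} {K : SimpleGraph W}

theorem pebblingMove_iff [DecidableEq V] {c c' : V → ℕ} :
    PebblingMove G c c' ↔
      ∃ v w, G.Adj v w ∧ 2 ≤ c v ∧ c' = c - Pi.single v 2 + Pi.single w 1 := by
  constructor
  · rintro ⟨v, w, hvw, hc, hv, hw, hrest⟩
    refine ⟨v, w, hvw, hc, funext fun u => ?_⟩
    by_cases huv : u = v
    · subst huv; simp [hv, hvw.ne]
    by_cases huw : u = w
    · subst huw; simp [hw, Ne.symm hvw.ne]
    · simp [hrest u huv huw, huv, huw]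
  · rintro ⟨v, w, hvw, hc, rfl⟩
    exact ⟨v, w, hvw, hc, by simp [hvw.ne], by simp [Ne.symm hvw.ne],
      fun u huv huw => by simp [huv, huw]⟩

theorem exists_reflTransGen_add_le_of_adj {v w : V} (hvw : G.Adj v w) (k : ℕ) {c : V → ℕ}
    (hc : 2 * k ≤ c v) : ∃ c', ReflTransGen (PebblingMove G) c c' ∧ c w + k ≤ c' w := by
  classical
  induction k generalizing c with
  | zero => exact ⟨c, .refl, le_rfl⟩
  | succ k ih =>
    set c₁ := c - Pi.single v 2 + Pi.single w 1
    have hmove : PebblingMove G c c₁ := pebblingMove_iff.2 ⟨v, w, hvw, by omega, rfl⟩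
    have hc₁v : c₁ v = c v - 2 := by simp [c₁, hvw.ne]
    have hc₁w : c₁ w = c w + 1 := by simp [c₁, Ne.symm hvw.ne]
    obtain ⟨c', hc₁c', hle⟩ := ih (c := c₁) (by omega)
    exact ⟨c', .head hmove hc₁c', by omega⟩

theorem solvable_of_walk {v r : V} (p : G.Walk v r) {c : V → ℕ} (hc : 2 ^ p.length ≤ c v) :
    Solvable G c r := by
  induction p generalizing c with
  | nil => exact ⟨c, .refl, by simpa using hc⟩
  | cons hadj q ih =>
    rw [SimpleGraph.Walk.length_cons, pow_succ] at hc
    obtain ⟨c', hcc', hle⟩ := 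
      exists_reflTransGen_add_le_of_adj hadj (2 ^ q.length) (c := c) (by omega)
    obtain ⟨c'', hc'c'', hr⟩ := ih (c := c') (by omega)
    exact ⟨c'', hcc'.trans hc'c'', hr⟩

theorem exists_reflTransGen_map (f : G ↪g K) {c c' : V → ℕ}
    (h : ReflTransGen (PebblingMove G) c c') {d : W → ℕ} (hcd : ∀ v, c v ≤ d (f v)) :
    ∃ d', ReflTransGen (PebblingMove K) d d' ∧ (∀ v, c' v ≤ d' (f v)) ∧
      ∀ u, (∀ v, f v ≠ u) → d' u = d u := by
  classical
  induction h with
  | refl => exact ⟨d, .refl, hcd, fun _ _ => rfl⟩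
  | tail _ hmove ih =>
    obtain ⟨d₁, hdd₁, hle, hout⟩ := ih
    obtain ⟨v, w, hvw, hc, rfl⟩ := pebblingMove_iff.1 hmove
    refine ⟨d₁ - Pi.single (f v) 2 + Pi.single (f w) 1,
      hdd₁.tail (pebblingMove_iff.2 ⟨f v, f w, f.map_adj_iff.2 hvw, hc.trans (hle v), rfl⟩),
      fun u => ?_, fun u hu => ?_⟩
    · have := hle u
      simp only [Pi.add_apply, Pi.sub_apply, Pi.single_apply, f.injective.eq_iff]
      split_ifs <;> omega
    · simp [Ne.symm (hu v), Ne.symm (hu w), hout u hu]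

theorem NSolvable.map (f : G ↪g K) {d : W → ℕ} {r : V} {t : ℕ}
    (h : NSolvable G (fun v => d (f v)) r t) : NSolvable K d (f r) t := by
  obtain ⟨c', hc', ht⟩ := h
  obtain ⟨d', hd', hle, -⟩ := exists_reflTransGen_map f hc' (fun _ => le_rfl)
  exact ⟨d', hd', ht.trans (hle r)⟩

theorem NSolvable.mono {c d : V → ℕ} (hcd : c ≤ d) {r : V} {t : ℕ} (h : NSolvable G c r t) :
    NSolvable G d r t := by
  obtain ⟨c', hc', ht⟩ := h
  obtain ⟨d', hd', hle, -⟩ := exists_reflTransGen_map Embedding.refl hc' hcd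
  exact ⟨d', hd', ht.trans (hle r)⟩

theorem NSolvable.of_reflTransGen {c d : V → ℕ} (hcd : ReflTransGen (PebblingMove G) c d)
    {r : V} {t : ℕ} (h : NSolvable G d r t) : NSolvable G c r t := by
  obtain ⟨d', hd', ht⟩ := h
  exact ⟨d', hcd.trans hd', ht⟩

end Pebbling

section PebblingNumber

variable {V : Type*} [Fintype V] {G : SimpleGraph V}

theorem exists_le_sum_eq_of_le {c : V → ℕ} {n : ℕ} (hn : n ≤ ∑ v, c v) :
    ∃ d ≤ c, ∑ v, d v = n := by
  classical
  induction n with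
  | zero => exact ⟨0, fun _ => Nat.zero_le _, by simp⟩
  | succ n ih =>
    obtain ⟨d, hdc, hd⟩ := ih (by omega)
    obtain ⟨v, -, hv⟩ := Finset.exists_lt_of_sum_lt (s := univ) (f := d) (g := c) (by omega)
    refine ⟨d + Pi.single v 1, fun u => ?_, ?_⟩
    · have := hdc u
      by_cases huv : u = v
      · subst huv; simpa using hv
      · simpa [huv] using this
    · simp [Finset.sum_add_distrib, hd]

theorem SimpleGraph.Connected.solvable_of_sum_eq_card_mul_two_pow_card (hG : G.Connected)
    {c : V → ℕ} (hc : ∑ v, c v = Fintype.card V * 2 ^ Fintype.card V) (r : V) :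
    Solvable G c r := by
  classical
  have : Nonempty V := hG.nonempty
  obtain ⟨v, -, hv⟩ : ∃ v ∈ univ, 2 ^ Fintype.card V ≤ c v :=
    Finset.exists_le_of_sum_le univ_nonempty (by simp [hc])
  obtain ⟨p⟩ := hG.preconnected v r
  exact solvable_of_walk (p.toPath : G.Walk v r)
    ((Nat.pow_le_pow_right two_pos p.toPath.2.length_lt.le).trans hv)

theorem SimpleGraph.Connected.solvable_of_pebblingNumber_le_sum (hG : G.Connected) {c : V → ℕ}
    (hc : pebblingNumber G ≤ ∑ v, c v) (r : V) : Solvable G c r := by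
  have hπ :
      pebblingNumber G ∈ {k | ∀ c : V → ℕ, ∑ v, c v = k → ∀ r, Solvable G c r} :=
    Nat.sInf_mem ⟨_, fun _ => hG.solvable_of_sum_eq_card_mul_two_pow_card⟩
  obtain ⟨d, hdc, hd⟩ := exists_le_sum_eq_of_le hc
  exact (hπ d hd r).mono hdc

end PebblingNumber

section BoxProd

variable {α β : Type*} {G : SimpleGraph α}

theorem SliceMove.pebblingMove_slice {j : β} {c c' : α × β → ℕ} (h : SliceMove G j c c') :
    PebblingMove G (fun i => c (i, j)) (fun i => c' (i, j)) := by
  obtain ⟨i, i', hii', hc, hi, hi', hrest⟩ := h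
  exact ⟨i, i', hii', hc, hi, hi', fun u hu hu' => hrest _ (by simpa) (by simpa)⟩

theorem exists_reflTransGen_boxProd_of_slices (H : SimpleGraph β) {c : α × β → ℕ} {rG : α}
    {N : β → ℕ} (S : Finset β)
    (hN : ∀ j ∈ S, ∃ c', ReflTransGen (SliceMove G j) c c' ∧ N j ≤ c' (rG, j)) :
    ∃ d, ReflTransGen (PebblingMove (G □ H)) c d ∧ (∀ j ∈ S, N j ≤ d (rG, j)) ∧
      ∀ u : α × β, u.2 ∉ S → d u = c u := by
  classical
  induction S using Finset.induction_on with
  | empty => exact ⟨c, .refl, by simp, fun _ _ => rfl⟩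
  | @insert j S hjS ih =>
    obtain ⟨d₁, hcd₁, hN₁, hout₁⟩ := ih fun j' hj' => hN j' (mem_insert_of_mem hj')
    obtain ⟨c', hcc', hNj⟩ := hN j (mem_insert_self j S)
    have hslice : ReflTransGen (PebblingMove G) (fun i => c (i, j)) (fun i => c' (i, j)) :=
      hcc'.lift _ fun _ _ h => h.pebblingMove_slice
    obtain ⟨d, hd₁d, hle, hout⟩ := exists_reflTransGen_map (boxProdLeft G H j) hslice
      (d := d₁) fun i => (hout₁ (i, j) hjS).ge
    have hout' : ∀ u : α × β, u.2 ≠ j → d u = d₁ u := fun u hu =>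
      hout u fun i h => hu (by simp [← h])
    refine ⟨d, hcd₁.trans hd₁d, fun j' hj' => ?_, fun u hu => ?_⟩
    · rcases mem_insert.1 hj' with rfl | hj'
      · exact hNj.trans (hle rG)
      · rw [hout' _ (ne_of_mem_of_not_mem hj' hjS)]
        exact hN₁ j' hj'
    · rw [mem_insert, not_or] at hu
      rw [hout' u hu.1, hout₁ u hu.2]

end BoxProd

/-- `N j` is any amount achievable on `(r_G, j)`; the paper takes it to be the maximum. -/
theorem stmt5_general {α β : Type*} [Fintype β]
    (G : SimpleGraph α) (H : SimpleGraph β) (hH : H.Connected)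
    (c : α × β → ℕ) (rG : α) (rH : β) (N : β → ℕ)
    (hN : ∀ j : β, ∃ c', Relation.ReflTransGen (SliceMove G j) c c' ∧ N j ≤ c' (rG, j))
    (h : pebblingNumber H ≤ ∑ j : β, N j) :
    Solvable (G.boxProd H) c (rG, rH) := by
  obtain ⟨d, hcd, hNd, -⟩ :=
    exists_reflTransGen_boxProd_of_slices H univ fun j _ => hN j
  have hcolumn : Solvable H (fun j => d (rG, j)) rH :=
    hH.solvable_of_pebblingNumber_le_sum (h.trans (sum_le_sum fun j _ => hNd j (mem_univ j))) rH
  exact NSolvable.of_reflTransGen hcd (NSolvable.map (boxProdRight G H rG) hcolumn)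

/-- if, for each `j ∈ V(H)`, within-slice moves in `G_j` can place `N j`
pebbles on `(r_G, j)`, and `Σ_j N j ≥ π(H)`, then the configuration is solvable.
(Taking `N j` to be the maximum achievable number gives the statement with maxima.) -/
theorem stmt5 {α β : Type*} [Fintype α] [Fintype β]
    (G : SimpleGraph α) (H : SimpleGraph β) (hG : G.Connected) (hH : H.Connected)
    (c : α × β → ℕ) (rG : α) (rH : β) (N : β → ℕ)
    (hN : ∀ j : β, ∃ c', Relation.ReflTransGen (SliceMove G j) c c' ∧ N j ≤ c' (rG, j))
    (h : pebblingNumber H ≤ ∑ j : β, N j) :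
    Solvable (G.boxProd H) c (rG, rH) :=
  stmt5_general G H hH c rG rH N hN h
end

section
/- Let G be a finite connected simple graph and let c be a pebbling configuration on G whose support has size s and whose size N satisfies N ≥ π₂(G, s). Then for every vertex r of G, some finite sequence of pebbling moves starting from c places at least 2 + ⌊(N − π₂(G, s)) / π(G)⌋ pebbles on r. -/
open SimpleGraph Finset

/-!
Pebbling solvability is additive: if `a` can put `m` pebbles on `r` and `b` can put `n`, then
`a + b` can put `m + n`, since the two move sequences can be run one after the other. Given `c`
of size `N ≥ π₂(G, s)`, set aside `q = ⌊(N - π₂) / π⌋` disjoint groups of `π(G)` pebbles, taken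
only from surplus pebbles so that the support of the rest is unchanged; this is possible because
`π₂(G, s) > s`, witnessed by the configuration with one pebble on each of `s` vertices, which
admits no move. The rest still has size at least `π₂` and support size `s`, so it puts two pebbles
on `r`, and each group puts one more.
-/

section Configurations

variable {ι : Type*} [Fintype ι]

theorem exists_le_and_sum_eq (d : ι → ℕ) {k : ℕ} (hk : k ≤ ∑ i, d i) :
    ∃ e ≤ d, ∑ i, e i = k := by
  classical
  induction k with
  | zero => exact ⟨0, fun _ => Nat.zero_le _, by simp⟩
  | succ k ih =>
    obtain ⟨e, hed, he⟩ := ih (by omega)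
    obtain ⟨i, -, hi⟩ := exists_lt_of_sum_lt (s := univ) (f := e) (g := d) (by omega)
    refine ⟨e + Pi.single i 1, fun j => ?_, by simp [sum_add_distrib, he]⟩
    rcases eq_or_ne j i with rfl | hj
    · simpa using hi
    · simpa [hj] using hed j

theorem sum_tsub_apply_of_le {d e : ι → ℕ} (h : e ≤ d) :
    ∑ i, (d - e) i = ∑ i, d i - ∑ i, e i := by
  simp only [Pi.sub_apply]
  exact sum_tsub_distrib _ fun i _ => h i

theorem exists_le_sum_eq_and_card_support_tsub_eq (c : ι → ℕ) {k : ℕ}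
    (hk : k + #(univ.filter fun i => 1 ≤ c i) ≤ ∑ i, c i) :
    ∃ e ≤ c, ∑ i, e i = k ∧
      #(univ.filter fun i => 1 ≤ (c - e) i) = #(univ.filter fun i => 1 ≤ c i) := by
  have hsurplus : ∑ i, (c i - 1) + #(univ.filter fun i => 1 ≤ c i) = ∑ i, c i := by
    rw [card_filter, ← sum_add_distrib]
    exact sum_congr rfl fun i _ => by split_ifs <;> omega
  obtain ⟨e, he, rfl⟩ := exists_le_and_sum_eq (fun i => c i - 1) (k := k) (by omega)
  refine ⟨e, fun i => (he i).trans (Nat.sub_le _ _), rfl, congr_arg _ ?_⟩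
  ext i
  simp only [mem_filter, mem_univ, true_and, Pi.sub_apply]
  have : e i ≤ c i - 1 := he i
  omega

end Configurations

section Pebbling

variable {V : Type*} {G : SimpleGraph V}

theorem PebblingMove.add_right {a b : V → ℕ} (h : PebblingMove G a b) (e : V → ℕ) :
    PebblingMove G (a + e) (b + e) := by
  obtain ⟨v, w, hadj, hv, hbv, hbw, hrest⟩ := h
  refine ⟨v, w, hadj, ?_, ?_, ?_, fun u hu hu' => ?_⟩ <;> simp [*] <;> omega

theorem PebblingMove.of_adj [DecidableEq V] {c : V → ℕ} {v w : V} (hadj : G.Adj v w)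
    (hv : 2 ≤ c v) :
    PebblingMove G c (Function.update (Function.update c v (c v - 2)) w (c w + 1)) :=
  ⟨v, w, hadj, hv, by simp [hadj.ne], by simp, fun u hu hu' => by simp [hu, hu']⟩

theorem reflTransGen_pebblingMove_add_right {a b : V → ℕ}
    (h : Relation.ReflTransGen (PebblingMove G) a b) (e : V → ℕ) :
    Relation.ReflTransGen (PebblingMove G) (a + e) (b + e) :=
  h.lift (· + e) fun _ _ hm => hm.add_right e

theorem reflTransGen_pebblingMove_eq_of_le_one {c c' : V → ℕ} (hc : ∀ v, c v ≤ 1)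
    (h : Relation.ReflTransGen (PebblingMove G) c c') : c' = c := by
  rcases h.cases_head with rfl | ⟨_, ⟨v, -, -, hv, -⟩, -⟩
  · rfl
  · exact absurd (hc v) (by omega)

namespace NSolvable

variable {c : V → ℕ} {r : V} {t : ℕ}

theorem of_le (h : t ≤ c r) : NSolvable G c r t :=
  ⟨c, .refl, h⟩

theorem trans {w : V} {m : ℕ} (h : NSolvable G c w m)
    (h' : ∀ c', m ≤ c' w → NSolvable G c' r t) : NSolvable G c r t := by
  obtain ⟨c₁, hc₁, hm⟩ := h
  obtain ⟨c₂, hc₂, ht⟩ := h' c₁ hm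
  exact ⟨c₂, hc₁.trans hc₂, ht⟩

theorem add {a b : V → ℕ} {m : ℕ} (ha : NSolvable G a r m) (hb : NSolvable G b r t) :
    NSolvable G (a + b) r (m + t) := by
  obtain ⟨a', ha, ham⟩ := ha
  obtain ⟨b', hb, hbt⟩ := hb
  refine ⟨a' + b', (reflTransGen_pebblingMove_add_right ha b).trans ?_, add_le_add ham hbt⟩
  rw [add_comm a' b, add_comm a' b']
  exact reflTransGen_pebblingMove_add_right hb a'

theorem of_adj {v w : V} (hadj : G.Adj v w) {k : ℕ} (h : 2 * k ≤ c v) :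
    NSolvable G c w (c w + k) := by
  classical
  induction k generalizing c with
  | zero => exact of_le le_rfl
  | succ k ih =>
    have hmove := PebblingMove.of_adj hadj (c := c) (by omega)
    obtain ⟨c', hc', hk⟩ := ih (c := Function.update (Function.update c v (c v - 2)) w (c w + 1))
      (by simp [hadj.ne]; omega)
    exact ⟨c', .head hmove hc', by simp at hk; omega⟩

theorem of_walk {v : V} (p : G.Walk v r) (h : t * 2 ^ p.length ≤ c v) : NSolvable G c r t := by
  induction p generalizing c with
  | nil => exact of_le (by simpa using h)
  | cons hadj q ih =>
    rw [Walk.length_cons, pow_succ] at h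
    exact (of_adj hadj (k := t * 2 ^ q.length) (by linarith)).trans fun _ hc' => ih (by omega)

variable [Fintype V]

theorem of_card_mul_lt_sum (hG : G.Connected)
    (h : Fintype.card V * (t * 2 ^ Fintype.card V) < ∑ v, c v) : NSolvable G c r t := by
  classical
  obtain ⟨v, -, hv⟩ := exists_lt_of_sum_lt (s := univ) (f := fun _ => t * 2 ^ Fintype.card V)
    (g := c) (by simpa using h)
  obtain ⟨p⟩ := hG.preconnected v r
  refine of_walk p.toPath (le_trans ?_ hv.le)
  gcongr
  · exact one_le_two
  · exact p.toPath.2.length_lt.le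

theorem of_sum_eq_mul {k : ℕ} (hk : ∀ c : V → ℕ, ∑ v, c v = k → Solvable G c r) :
    ∀ {q : ℕ} {e : V → ℕ}, ∑ v, e v = q * k → NSolvable G e r q
  | 0, _, _ => of_le (Nat.zero_le _)
  | q + 1, e, he => by
    obtain ⟨e₁, he₁, hsum₁⟩ := exists_le_and_sum_eq e (k := k) (by rw [he]; nlinarith)
    have hrest : ∑ v, (e - e₁) v = q * k := by
      rw [sum_tsub_apply_of_le he₁, he, hsum₁, add_one_mul, Nat.add_sub_cancel]
    have h := (hk e₁ hsum₁).add (of_sum_eq_mul hk hrest)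
    rwa [add_tsub_cancel_of_le he₁, add_comm 1] at h

end NSolvable

section Numbers

variable [Fintype V]

theorem solvable_of_sum_eq_pebblingNumber (hG : G.Connected) {c : V → ℕ}
    (h : ∑ v, c v = pebblingNumber G) (r : V) : Solvable G c r :=
  Nat.sInf_mem (s := {k | ∀ c : V → ℕ, ∑ v, c v = k → ∀ r, Solvable G c r})
    ⟨Fintype.card V * (1 * 2 ^ Fintype.card V) + 1,
      fun _ hc _ => NSolvable.of_card_mul_lt_sum hG (by omega)⟩ c h r

theorem nsolvable_two_of_twoPebblingNumber_le (hG : G.Connected) {c : V → ℕ} {s : ℕ}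
    (hs : #(univ.filter fun v => 1 ≤ c v) = s) (h : twoPebblingNumber G s ≤ ∑ v, c v) (r : V) :
    NSolvable G c r 2 :=
  Nat.sInf_mem (s := {m | ∀ (r : V) (c : V → ℕ), m ≤ ∑ v, c v →
      #(univ.filter fun v => 1 ≤ c v) = s → NSolvable G c r 2})
    ⟨Fintype.card V * (2 * 2 ^ Fintype.card V) + 1,
      fun _ _ hc _ => NSolvable.of_card_mul_lt_sum hG hc⟩ r c h hs

theorem lt_twoPebblingNumber (hG : G.Connected) {s : ℕ} (hs : s ≤ Fintype.card V) :
    s < twoPebblingNumber G s := by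
  classical
  obtain ⟨S, -, rfl⟩ := exists_subset_card_eq (s := (univ : Finset V)) hs
  by_contra! h
  let c : V → ℕ := fun v => if v ∈ S then 1 else 0
  have hc : ∀ v, c v ≤ 1 := fun v => by simp only [c]; split_ifs <;> simp
  have hsupp : #(univ.filter fun v => 1 ≤ c v) = #S := by
    congr 1; ext v; by_cases hv : v ∈ S <;> simp [c, hv]
  obtain ⟨r⟩ := hG.nonempty
  obtain ⟨c', hc', two_le⟩ :=
    nsolvable_two_of_twoPebblingNumber_le hG hsupp (h.trans (by simp [c])) r
  rw [reflTransGen_pebblingMove_eq_of_le_one hc hc'] at two_le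
  linarith [hc r]

end Numbers

end Pebbling

/-- a configuration of size `N ≥ π₂(G, s)` with support size `s` can place at
least `2 + ⌊(N - π₂(G, s)) / π(G)⌋` pebbles on any root `r`. -/
theorem stmt6 {V : Type*} [Fintype V] (G : SimpleGraph V) (hG : G.Connected)
    (c : V → ℕ) (s : ℕ)
    (hs : (Finset.univ.filter fun v => 1 ≤ c v).card = s)
    (hN : twoPebblingNumber G s ≤ ∑ v, c v) (r : V) :
    NSolvable G c r (2 + ((∑ v, c v) - twoPebblingNumber G s) / pebblingNumber G) := by
  set q := ((∑ v, c v) - twoPebblingNumber G s) / pebblingNumber G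
  have hsπ₂ : s < twoPebblingNumber G s := lt_twoPebblingNumber hG (hs ▸ card_filter_le univ _)
  have hq : q * pebblingNumber G ≤ (∑ v, c v) - twoPebblingNumber G s := Nat.div_mul_le_self _ _
  obtain ⟨e, hec, he, hsupp⟩ :=
    exists_le_sum_eq_and_card_support_tsub_eq c (k := q * pebblingNumber G) (by omega)
  have hrest : twoPebblingNumber G s ≤ ∑ v, (c - e) v := by
    rw [sum_tsub_apply_of_le hec]
    omega
  have htwo := nsolvable_two_of_twoPebblingNumber_le hG (hsupp.trans hs) hrest r
  have hgroups :=
    NSolvable.of_sum_eq_mul (fun _ h => solvable_of_sum_eq_pebblingNumber hG h r) he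
  simpa [tsub_add_cancel_of_le hec] using htwo.add hgroups
end
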